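/- Let e⁰ ∈ V be arbitrary and let Ξ⁰, Ξ¹, Ξ², Ξ³ ∈ V. If Σ_{j,k} ε_{ijk}·e^j∧Ξ^k = 0 for i = 1,2,3 and Ξ⁰∧e^j − Ξ^j∧e⁰ = 0 for j = 1,2,3, then Ξ^I = 0 for every I ∈ {0,1,2,3}. (This is the uniqueness statement used in the paper to conclude that on the constraint submanifold the only solution of the homogeneous system (3.40)–(3.41) is Ξ^I = 0, yielding Z_e^I = De_t^I − ω_t^I{}_J e^J.) -/

import Mathlib

/-!
Write `Ξ^k = ∑ₘ X_{km} e^m` for `k = 1, 2, 3`. Pairing the first system with the 2-forms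
`e^p ∧ e^q` gives `∑ₖ (ε_{ipk} X_{kq} - ε_{iqk} X_{kp}) = 0`, and contracting with `ε_{lpq}`
turns this into `(tr X) δ_{il} - X_{li} = 0`. Its trace is `2 tr X = 0`, so `X = 0`. The second
system then reduces to `Ξ⁰ ∧ e^j = 0` for every `j`, which forces `Ξ⁰ = 0` because `dim V ≥ 2`.
-/

open ExteriorAlgebra

noncomputable section

/-- 3-index Levi-Civita symbol on `Fin 3`, normalized so that `ε₁₂₃ = 1`. -/
def lc3 (i j k : Fin 3) : ℝ :=
  ((j.val : ℝ) - (i.val : ℝ)) * ((k.val : ℝ) - (i.val : ℝ)) * ((k.val : ℝ) - (j.val : ℝ)) / 2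

namespace ExteriorAlgebra

variable {R M : Type*} [CommRing R] [AddCommGroup M] [Module R M]

def wedgePairing (f g : Module.Dual R M) : ExteriorAlgebra R M →ₗ[R] R :=
  liftAlternating (Pi.single 2 (Matrix.detRowAlternating.compLinearMap (LinearMap.pi ![f, g])))

theorem wedgePairing_ι_mul_ι (f g : Module.Dual R M) (x y : M) :
    wedgePairing f g (ι R x * ι R y) = f x * g y - g x * f y := by
  have hxy : ι R x * ι R y = ιMulti R 2 ![x, y] := by
    simp [ιMulti_apply]
  rw [wedgePairing, hxy, liftAlternating_apply_ιMulti, Pi.single_eq_same,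
    AlternatingMap.compLinearMap_apply]
  exact (Matrix.det_fin_two _).trans (by simp)

theorem wedgePairing_coord_ι_basis_mul_ι {κ : Type*} [DecidableEq κ] (b : Module.Basis κ R M)
    (p q j : κ) (y : M) :
    wedgePairing (b.coord p) (b.coord q) (ι R (b j) * ι R y) =
      (if j = p then b.repr y q else 0) - (if j = q then b.repr y p else 0) := by
  simp [wedgePairing_ι_mul_ι, Finsupp.single_apply]

theorem eq_zero_of_ι_mul_ι_basis_eq_zero {κ : Type*} [Nontrivial κ] (b : Module.Basis κ R M)
    {x : M} (h : ∀ j, ι R x * ι R (b j) = 0) : x = 0 := by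
  classical
  refine b.ext_elem fun p => ?_
  obtain ⟨q, hqp⟩ := exists_ne p
  have := congrArg (wedgePairing (b.coord p) (b.coord q)) (h q)
  simpa [wedgePairing_ι_mul_ι, Finsupp.single_apply, hqp] using this

end ExteriorAlgebra

-- `∑ₚ ε_{lpq} ε_{ipk} = δ_{li} δ_{qk} - δ_{lk} δ_{qi}`
theorem lc3_contraction (X : Matrix (Fin 3) (Fin 3) ℝ) (i l : Fin 3) :
    ∑ p, ∑ q, lc3 l p q * ∑ k, (lc3 i p k * X k q - lc3 i q k * X k p) =
      2 * ((if i = l then X.trace else 0) - X l i) := by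
  fin_cases i <;> fin_cases l <;> simp [Fin.sum_univ_three, lc3, Matrix.trace] <;> ring

theorem Matrix.eq_zero_of_sum_lc3_mul_sub_eq_zero {X : Matrix (Fin 3) (Fin 3) ℝ}
    (h : ∀ i p q, ∑ k, (lc3 i p k * X k q - lc3 i q k * X k p) = 0) : X = 0 := by
  have hX : ∀ i l, (if i = l then X.trace else 0) = X l i := fun i l => by
    have := lc3_contraction X i l
    simp only [h, mul_zero, Finset.sum_const_zero] at this
    linarith
  have htr : X.trace = 0 := by
    have : X.trace = 3 * X.trace :=
      calc X.trace = ∑ i, X i i := rfl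
        _ = ∑ _i : Fin 3, X.trace := Finset.sum_congr rfl fun i _ => by simpa using (hX i i).symm
        _ = 3 * X.trace := by simp
    linarith
  ext l i
  simpa [htr] using (hX i l).symm

theorem eq_zero_of_sum_lc3_smul_ι_mul_ι {V : Type*} [AddCommGroup V] [Module ℝ V]
    (b : Module.Basis (Fin 3) ℝ V) {Y : Fin 3 → V}
    (h : ∀ i, ∑ j, ∑ k, lc3 i j k • (ι ℝ (b j) * ι ℝ (Y k)) = 0) : Y = 0 := by
  have hX : Matrix.of (fun k m => b.repr (Y k) m) = 0 :=
    Matrix.eq_zero_of_sum_lc3_mul_sub_eq_zero fun i p q => by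
      have := congrArg (wedgePairing (b.coord p) (b.coord q)) (h i)
      simpa [map_sum, wedgePairing_coord_ι_basis_mul_ι, mul_sub, Finset.sum_sub_distrib] using this
  funext k
  exact b.ext_elem fun m => by simpa using congrFun (congrFun hX k) m

/-- if `Ξ⁰,…,Ξ³ ∈ V` satisfy the homogeneous system
`Σ_{j,k} ε_{ijk}·e^j∧Ξ^k = 0` (for `i = 1,2,3`) and `Ξ⁰∧e^j − Ξ^j∧e⁰ = 0`
(for `j = 1,2,3`, with `e⁰ ∈ V` arbitrary), then `Ξ^I = 0` for every `I`. -/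
theorem stmt_8 (V : Type*) [AddCommGroup V] [Module ℝ V] (b : Module.Basis (Fin 3) ℝ V) (e0 : V)
    (Ξ : Fin 4 → V)
    (h1 : ∀ i : Fin 3, ∑ j : Fin 3, ∑ k : Fin 3,
      lc3 i j k • (ExteriorAlgebra.ι ℝ (b j) * ExteriorAlgebra.ι ℝ (Ξ k.succ)) = 0)
    (h2 : ∀ j : Fin 3,
      ExteriorAlgebra.ι ℝ (Ξ 0) * ExteriorAlgebra.ι ℝ (b j) -
        ExteriorAlgebra.ι ℝ (Ξ j.succ) * ExteriorAlgebra.ι ℝ e0 = 0) :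
    ∀ I : Fin 4, Ξ I = 0 := by
  have hspatial : Ξ ∘ Fin.succ = 0 := eq_zero_of_sum_lc3_smul_ι_mul_ι b h1
  have htime : Ξ 0 = 0 :=
    eq_zero_of_ι_mul_ι_basis_eq_zero b fun j => by
      simpa [show Ξ j.succ = 0 from congrFun hspatial j] using h2 j
  intro I
  cases I using Fin.cases with
  | zero => exact htime
  | succ j => exact congrFun hspatial j

end
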